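/- Gradient bound (condition C2) for ALBUM 3 (inequality (6.10) / L:C2ALBUM3). Let F ∈ ℝ^{m×n}, let f₀ : ℝ^n → ℝ be differentiable with L-Lipschitz gradient on ℝ^n, and ρ, μ > 0. Fix u⁺, y ∈ ℝ^m, x ∈ ℝ^n, and define x⁺ := x − (1/μ)(∇f₀(x) + Fᵀy + ρFᵀ(Fx − u⁺)). Then ‖∇f₀(x⁺) + Fᵀy + ρFᵀ(Fx⁺ − u⁺)‖ ≤ (L + ρ‖F‖² + μ)‖x⁺ − x‖, where ‖F‖ is the operator norm of F. -/

import Mathlib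

/-- Matrix–vector multiplication, with Euclidean norms on both sides. -/
noncomputable def mulVecE {m n : ℕ} (A : Matrix (Fin m) (Fin n) ℝ)
    (v : EuclideanSpace ℝ (Fin n)) : EuclideanSpace ℝ (Fin m) :=
  WithLp.toLp 2 (A.mulVec v)

/-- The operator (spectral) norm of a matrix, acting between Euclidean spaces. -/
noncomputable def opNorm {m n : ℕ} (A : Matrix (Fin m) (Fin n) ℝ) : ℝ :=
  ‖LinearMap.toContinuousLinearMap (Matrix.toEuclideanLin A)‖

/-!
Write `G(z) = ∇f₀(z) + Fᵀy + ρFᵀ(Fz − u⁺)`. The step is `x⁺ = x − μ⁻¹ G(x)`, so `G(x) = μ(x − x⁺)`,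
and `G(x⁺) = (G(x⁺) − G(x)) + G(x)`. The map `G` is `(L + ρ‖F‖²)`-Lipschitz, since its non-gradient
part changes by `ρFᵀF(x⁺ − x)`; the triangle inequality gives the bound.
-/

open scoped Matrix

section ExplicitStep

variable {E : Type*} [NormedAddCommGroup E] [NormedSpace ℝ E]

theorem norm_apply_le_of_eq_sub_smul_apply {G : E → E} {K μ : ℝ}
    (hG : ∀ a b, ‖G a - G b‖ ≤ K * ‖a - b‖) (hμ : 0 < μ) {x xp : E}
    (hxp : xp = x - (1 / μ) • G x) :
    ‖G xp‖ ≤ (K + μ) * ‖xp - x‖ := by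
  have hGx : G x = μ • (x - xp) := by
    rw [hxp, sub_sub_cancel, smul_smul, mul_one_div_cancel hμ.ne', one_smul]
  have hGx_norm : ‖G x‖ = μ * ‖xp - x‖ := by
    rw [hGx, norm_smul, Real.norm_of_nonneg hμ.le, norm_sub_rev]
  calc ‖G xp‖ = ‖(G xp - G x) + G x‖ := by rw [sub_add_cancel]
    _ ≤ ‖G xp - G x‖ + ‖G x‖ := norm_add_le _ _
    _ ≤ K * ‖xp - x‖ + μ * ‖xp - x‖ := by rw [hGx_norm]; gcongr; exact hG xp x
    _ = (K + μ) * ‖xp - x‖ := by ring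

end ExplicitStep

section MulVecE

open scoped Matrix.Norms.L2Operator

variable {m n : ℕ}

theorem opNorm_eq_l2OpNorm (A : Matrix (Fin m) (Fin n) ℝ) : opNorm A = ‖A‖ := rfl

theorem opNorm_transpose (A : Matrix (Fin m) (Fin n) ℝ) : opNorm Aᵀ = opNorm A := by
  rw [opNorm_eq_l2OpNorm, opNorm_eq_l2OpNorm, ← Matrix.conjTranspose_eq_transpose_of_trivial]
  exact Matrix.l2_opNorm_conjTranspose A

theorem norm_mulVecE_le (A : Matrix (Fin m) (Fin n) ℝ) (v : EuclideanSpace ℝ (Fin n)) :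
    ‖mulVecE A v‖ ≤ opNorm A * ‖v‖ :=
  Matrix.l2_opNorm_mulVec A v

theorem mulVecE_sub (A : Matrix (Fin m) (Fin n) ℝ) (v w : EuclideanSpace ℝ (Fin n)) :
    mulVecE A (v - w) = mulVecE A v - mulVecE A w :=
  map_sub (Matrix.toEuclideanLin A) v w

theorem norm_mulVecE_transpose_mulVecE_le (A : Matrix (Fin m) (Fin n) ℝ)
    (v : EuclideanSpace ℝ (Fin n)) :
    ‖mulVecE Aᵀ (mulVecE A v)‖ ≤ opNorm A ^ 2 * ‖v‖ :=
  calc ‖mulVecE Aᵀ (mulVecE A v)‖ ≤ opNorm A * ‖mulVecE A v‖ := by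
        simpa only [opNorm_transpose] using norm_mulVecE_le Aᵀ (mulVecE A v)
    _ ≤ opNorm A * (opNorm A * ‖v‖) := by
        gcongr
        · exact norm_nonneg _
        · exact norm_mulVecE_le A v
    _ = opNorm A ^ 2 * ‖v‖ := by ring

end MulVecE

section AugmentedLagrangian

variable {m n : ℕ}

/-- `∇ₓL_ρ(x, u, y)` for the augmented Lagrangian of `f₀(x) + h(u)` subject to `Ax = u`. -/
noncomputable def augLagrangianGradX (A : Matrix (Fin m) (Fin n) ℝ)
    (f₀ : EuclideanSpace ℝ (Fin n) → ℝ) (ρ : ℝ) (u y : EuclideanSpace ℝ (Fin m))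
    (x : EuclideanSpace ℝ (Fin n)) : EuclideanSpace ℝ (Fin n) :=
  gradient f₀ x + mulVecE Aᵀ y + ρ • mulVecE Aᵀ (mulVecE A x - u)

theorem augLagrangianGradX_sub (A : Matrix (Fin m) (Fin n) ℝ)
    (f₀ : EuclideanSpace ℝ (Fin n) → ℝ) (ρ : ℝ) (u y : EuclideanSpace ℝ (Fin m))
    (a b : EuclideanSpace ℝ (Fin n)) :
    augLagrangianGradX A f₀ ρ u y a - augLagrangianGradX A f₀ ρ u y b
      = (gradient f₀ a - gradient f₀ b) + ρ • mulVecE Aᵀ (mulVecE A (a - b)) := by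
  rw [mulVecE_sub A, ← sub_sub_sub_cancel_right (mulVecE A a) (mulVecE A b) u,
    mulVecE_sub Aᵀ, smul_sub]
  unfold augLagrangianGradX
  abel

theorem norm_augLagrangianGradX_sub_le (A : Matrix (Fin m) (Fin n) ℝ)
    {f₀ : EuclideanSpace ℝ (Fin n) → ℝ} {L : ℝ}
    (hL : ∀ x x' : EuclideanSpace ℝ (Fin n), ‖gradient f₀ x - gradient f₀ x'‖ ≤ L * ‖x - x'‖)
    {ρ : ℝ} (hρ : 0 ≤ ρ) (u y : EuclideanSpace ℝ (Fin m)) (a b : EuclideanSpace ℝ (Fin n)) :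
    ‖augLagrangianGradX A f₀ ρ u y a - augLagrangianGradX A f₀ ρ u y b‖
      ≤ (L + ρ * opNorm A ^ 2) * ‖a - b‖ :=
  calc _ ≤ ‖gradient f₀ a - gradient f₀ b‖ + ‖ρ • mulVecE Aᵀ (mulVecE A (a - b))‖ := by
        rw [augLagrangianGradX_sub]; exact norm_add_le _ _
    _ ≤ L * ‖a - b‖ + ρ * (opNorm A ^ 2 * ‖a - b‖) := by
        rw [norm_smul, Real.norm_of_nonneg hρ]
        gcongr
        exacts [hL a b, norm_mulVecE_transpose_mulVecE_le A (a - b)]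
    _ = (L + ρ * opNorm A ^ 2) * ‖a - b‖ := by ring

end AugmentedLagrangian

theorem album3_C2_bound_general {n m : ℕ}
    (A : Matrix (Fin m) (Fin n) ℝ)
    (f₀ : EuclideanSpace ℝ (Fin n) → ℝ) (L : ℝ)
    (hL : ∀ x x' : EuclideanSpace ℝ (Fin n),
      ‖gradient f₀ x - gradient f₀ x'‖ ≤ L * ‖x - x'‖)
    (ρ μ : ℝ) (hρ : 0 < ρ) (hμ : 0 < μ)
    (up y : EuclideanSpace ℝ (Fin m)) (x xp : EuclideanSpace ℝ (Fin n))
    (hxp : xp = x - (1 / μ) • (gradient f₀ x + mulVecE A.transpose y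
      + ρ • mulVecE A.transpose (mulVecE A x - up))) :
    ‖gradient f₀ xp + mulVecE A.transpose y
        + ρ • mulVecE A.transpose (mulVecE A xp - up)‖
      ≤ (L + ρ * opNorm A ^ 2 + μ) * ‖xp - x‖ :=
  norm_apply_le_of_eq_sub_smul_apply (G := augLagrangianGradX A f₀ ρ up y)
    (norm_augLagrangianGradX_sub_le A hL hρ.le up y) hμ hxp

/-- **Gradient bound (condition C2) for ALBUM 3** (inequality (6.10)). For the explicit
proximal-linearized step `x⁺ = x − (1/μ)(∇f₀(x) + Fᵀy + ρFᵀ(Fx − u⁺))`, one has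
`‖∇f₀(x⁺) + Fᵀy + ρFᵀ(Fx⁺ − u⁺)‖ ≤ (L + ρ‖F‖² + μ)‖x⁺ − x‖`. -/
theorem album3_C2_bound {n m : ℕ}
    (A : Matrix (Fin m) (Fin n) ℝ)
    (f₀ : EuclideanSpace ℝ (Fin n) → ℝ) (hdiff : Differentiable ℝ f₀) (L : ℝ)
    (hL : ∀ x x' : EuclideanSpace ℝ (Fin n),
      ‖gradient f₀ x - gradient f₀ x'‖ ≤ L * ‖x - x'‖)
    (ρ μ : ℝ) (hρ : 0 < ρ) (hμ : 0 < μ)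
    (up y : EuclideanSpace ℝ (Fin m)) (x xp : EuclideanSpace ℝ (Fin n))
    (hxp : xp = x - (1 / μ) • (gradient f₀ x + mulVecE A.transpose y
      + ρ • mulVecE A.transpose (mulVecE A x - up))) :
    ‖gradient f₀ xp + mulVecE A.transpose y
        + ρ • mulVecE A.transpose (mulVecE A xp - up)‖
      ≤ (L + ρ * opNorm A ^ 2 + μ) * ‖xp - x‖ :=
  album3_C2_bound_general A f₀ L hL ρ μ hρ hμ up y x xp hxp
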